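/- arXiv:2207.11644 — 2 statements merged into one kernel-verified Lean document; each statement's English description precedes it below -/
import Mathlib

section
/- Let F_{i,k} and E_{i,k} be the extended crystal operators on B̂(∞). Then E_{i,k} ∘ F_{i,k} = id and F_{i,k} ∘ E_{i,k} = id on B̂(∞). -/
/-- An abstract model of the crystal `B(∞)` of the negative half of a quantum group,
recording the Kashiwara operators `f̃ᵢ, ẽᵢ`, their starred versions, the statistics
`εᵢ, εᵢ*`, the weight function (in simple-root coordinates) and the Cartan matrix,
together with the standard crystal identities. -/
structure InfCrystal (I : Type*) where
  B : Type*
  A : I → I → ℤ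
  hv : B
  f : I → B → B
  e : I → B → B
  fs : I → B → B
  es : I → B → B
  eps : I → B → ℕ
  epss : I → B → ℕ
  wt : B → I →₀ ℤ
  eps_hv : ∀ i, eps i hv = 0
  epss_hv : ∀ i, epss i hv = 0
  wt_hv : wt hv = 0
  e_f : ∀ i b, e i (f i b) = b
  f_e : ∀ i b, 0 < eps i b → f i (e i b) = b
  eps_f : ∀ i b, eps i (f i b) = eps i b + 1
  eps_e : ∀ i b, 0 < eps i b → eps i (e i b) = eps i b - 1
  es_fs : ∀ i b, es i (fs i b) = b
  fs_es : ∀ i b, 0 < epss i b → fs i (es i b) = b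
  epss_fs : ∀ i b, epss i (fs i b) = epss i b + 1
  epss_es : ∀ i b, 0 < epss i b → epss i (es i b) = epss i b - 1
  wt_f : ∀ i b, wt (f i b) = wt b - Finsupp.single i 1
  wt_fs : ∀ i b, wt (fs i b) = wt b - Finsupp.single i 1
  wt_e : ∀ i b, 0 < eps i b → wt (e i b) = wt b + Finsupp.single i 1
  wt_es : ∀ i b, 0 < epss i b → wt (es i b) = wt b + Finsupp.single i 1

namespace InfCrystal

variable {I : Type*} (C : InfCrystal I)

/-- The pairing `⟨hᵢ, λ⟩` computed from the Cartan matrix. -/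
def pair (i : I) (l : I →₀ ℤ) : ℤ := l.sum fun j c => C.A i j * c

/-- The underlying set of the extended crystal `B̂(∞)`:
sequences indexed by `ℤ`, equal to the highest weight vector almost everywhere. -/
def Hat := {b : ℤ → C.B // {k | b k ≠ C.hv}.Finite}

/-- The highest weight element `1̂` of the extended crystal. -/
def one : C.Hat := ⟨fun _ => C.hv, by simp⟩

/-- The shift `D^p` on the extended crystal. -/
def shift (p : ℤ) (b : C.Hat) : C.Hat :=
  ⟨fun k => b.1 (k - p), by
    refine (b.2.image (· + p)).subset ?_
    intro k hk
    exact ⟨k - p, hk, by ring⟩⟩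

/-- `ε̂_{i,k}`. -/
def ehat (i : I) (k : ℤ) (b : C.Hat) : ℤ :=
  (C.eps i (b.1 k) : ℤ) - (C.epss i (b.1 (k + 1)) : ℤ)

/-- Update one component of an extended crystal element. -/
def update (b : C.Hat) (k : ℤ) (x : C.B) : C.Hat :=
  ⟨Function.update b.1 k x, by
    refine (b.2.insert k).subset ?_
    intro j hj
    rcases eq_or_ne j k with h | h
    · exact Set.mem_insert_iff.mpr (Or.inl h)
    · exact Set.mem_insert_iff.mpr (Or.inr (by simpa [Function.update_of_ne h] using hj))⟩

/-- The extended crystal operator `F_{i,k}`. -/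
def Fop (i : I) (k : ℤ) (b : C.Hat) : C.Hat :=
  if 0 ≤ C.ehat i k b then C.update b k (C.f i (b.1 k))
  else C.update b (k + 1) (C.es i (b.1 (k + 1)))

/-- The extended crystal operator `E_{i,k}`. -/
def Eop (i : I) (k : ℤ) (b : C.Hat) : C.Hat :=
  if 0 < C.ehat i k b then C.update b k (C.e i (b.1 k))
  else C.update b (k + 1) (C.fs i (b.1 (k + 1)))

/-- `ẽᵢ^{max}`. -/
def emax (i : I) (b : C.B) : C.B := (C.e i)^[C.eps i b] b

/-- `(ẽᵢ*)^{max}`. -/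
def esmax (i : I) (b : C.B) : C.B := (C.es i)^[C.epss i b] b

/-- The Saito crystal reflection `Tᵢ(b) = f̃ᵢ^{φᵢ*(b)} (ẽᵢ*)^{εᵢ*(b)}(b)`
(meant for `b` with `εᵢ(b) = 0`). -/
def saitoT (i : I) (b : C.B) : C.B :=
  (C.f i)^[((C.epss i b : ℤ) + C.pair i (C.wt b)).toNat] ((C.es i)^[C.epss i b] b)

/-- The inverse Saito crystal reflection `Tᵢ*(b) = (f̃ᵢ*)^{φᵢ(b)} ẽᵢ^{εᵢ(b)}(b)`. -/
def saitoTs (i : I) (b : C.B) : C.B :=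
  (C.fs i)^[((C.eps i b : ℤ) + C.pair i (C.wt b)).toNat] ((C.e i)^[C.eps i b] b)

/-- `T̃ᵢ = Tᵢ ∘ ẽᵢ^{max}`. -/
def tT (i : I) (b : C.B) : C.B := C.saitoT i (C.emax i b)

/-- `T̃ᵢ* = Tᵢ* ∘ (ẽᵢ*)^{max}`. -/
def tTs (i : I) (b : C.B) : C.B := C.saitoTs i (C.esmax i b)

lemma tT_hv (i : I) : C.tT i C.hv = C.hv := by
  simp [tT, emax, saitoT, pair, C.eps_hv, C.epss_hv, C.wt_hv]

lemma tTs_hv (i : I) : C.tTs i C.hv = C.hv := by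
  simp [tTs, esmax, saitoTs, pair, C.eps_hv, C.epss_hv, C.wt_hv]

/-- The braid group operator `Rᵢ` on the extended crystal:
`Rᵢ(b)ₖ = (f̃ᵢ*)^{εᵢ(b_{k-1})}(T̃ᵢ(bₖ))`. -/
def Rop (i : I) (b : C.Hat) : C.Hat :=
  ⟨fun k => (C.fs i)^[C.eps i (b.1 (k - 1))] (C.tT i (b.1 k)), by
    refine (b.2.union (b.2.image (· + 1))).subset ?_
    intro k hk
    by_cases h1 : b.1 k = C.hv
    · by_cases h2 : b.1 (k - 1) = C.hv
      · exact absurd (by simp [h1, h2, C.eps_hv, C.tT_hv]) hk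
      · exact Or.inr ⟨k - 1, h2, by ring⟩
    · exact Or.inl h1⟩

/-- The braid group operator `Rᵢ*` on the extended crystal:
`Rᵢ*(b)ₖ = f̃ᵢ^{εᵢ*(b_{k+1})}(T̃ᵢ*(bₖ))`. -/
def Rops (i : I) (b : C.Hat) : C.Hat :=
  ⟨fun k => (C.f i)^[C.epss i (b.1 (k + 1))] (C.tTs i (b.1 k)), by
    refine (b.2.union (b.2.image (· - 1))).subset ?_
    intro k hk
    by_cases h1 : b.1 k = C.hv
    · by_cases h2 : b.1 (k + 1) = C.hv
      · exact absurd (by simp [h1, h2, C.epss_hv, C.tTs_hv]) hk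
      · exact Or.inr ⟨k + 1, h2, by ring⟩
    · exact Or.inl h1⟩

/-- The weight `ĥwt(b) = Σₖ (-1)ᵏ wt(bₖ)` of an extended crystal element. -/
noncomputable def hwt (b : C.Hat) : I →₀ ℤ :=
  ∑ᶠ k : ℤ, (((-1 : ℤˣ) ^ k : ℤˣ) : ℤ) • C.wt (b.1 k)

/-- The simple reflection `sᵢ(λ) = λ - ⟨hᵢ, λ⟩ αᵢ` on the root lattice. -/
noncomputable def sref (i : I) (l : I →₀ ℤ) : I →₀ ℤ := l - Finsupp.single i (C.pair i l)

/-- Componentwise application of a crystal map to an extended crystal element. -/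
def mapHat (z : C.B → C.B) (hz : z C.hv = C.hv) (b : C.Hat) : C.Hat :=
  ⟨fun k => z (b.1 k), by
    refine b.2.subset ?_
    intro k hk
    simp only [Set.mem_setOf_eq] at hk ⊢
    exact fun h => hk (by rw [h, hz])⟩

/-- The element of the extended crystal concentrated at position `k` with value `x`. -/
def unitSeq (k : ℤ) (x : C.B) : C.Hat := C.update C.one k x

/-- Composite `R_{i₁} R_{i₂} ⋯ R_{i_t}`. -/
def Rcomp (l : List I) : C.Hat → C.Hat := l.foldr (fun i g => C.Rop i ∘ g) id

/-- Composite `R*_{i₁} R*_{i₂} ⋯ R*_{i_t}`. -/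
def Rscomp (l : List I) : C.Hat → C.Hat := l.foldr (fun i g => C.Rops i ∘ g) id

end InfCrystal

/-- `m(i,j)` determined by the product `a_{ij} a_{ji}` of Cartan matrix entries. -/
def braidM (x : ℤ) : ℕ :=
  if x = 0 then 2 else if x = 1 then 3 else if x = 2 then 4 else 6

/-- The alternating word `(i, j, i, j, …)` of length `n`. -/
def altWord {I : Type*} (i j : I) : ℕ → List I
  | 0 => []
  | n + 1 => i :: altWord j i n

/-! Applying `f̃ᵢ` at `k` turns `ε̂_{i,k} ≥ 0` into `ε̂_{i,k} > 0`, and applying `ẽᵢ*` at `k + 1`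
when `ε̂_{i,k} < 0` raises `ε̂_{i,k}` by one, keeping it `≤ 0`. So `E_{i,k}` always takes the branch
that undoes the step of `F_{i,k}`, and symmetrically `F_{i,k}` takes the branch undoing `E_{i,k}`. -/

namespace InfCrystal

variable {I : Type*} (C : InfCrystal I)

lemma update_val (b : C.Hat) (k : ℤ) (x : C.B) :
    (C.update b k x).1 = Function.update b.1 k x := rfl

@[simp]
lemma update_apply_self (b : C.Hat) (k : ℤ) (x : C.B) : (C.update b k x).1 k = x := by
  simp [update_val]

@[simp]
lemma update_update_apply_self (b : C.Hat) (k : ℤ) (x : C.B) :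
    C.update (C.update b k x) k (b.1 k) = b :=
  Subtype.ext <| by simp [update_val]

lemma ehat_update_self (i : I) (k : ℤ) (b : C.Hat) (x : C.B) :
    C.ehat i k (C.update b k x) = C.eps i x - C.epss i (b.1 (k + 1)) := by
  simp [ehat, update_val]

lemma ehat_update_succ (i : I) (k : ℤ) (b : C.Hat) (x : C.B) :
    C.ehat i k (C.update b (k + 1) x) = C.eps i (b.1 k) - C.epss i x := by
  simp [ehat, update_val]

lemma Eop_leftInverse_Fop (i : I) (k : ℤ) : Function.LeftInverse (C.Eop i k) (C.Fop i k) := by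
  intro b
  unfold Fop
  split_ifs with h <;> unfold ehat at h
  · have hE : 0 < C.ehat i k (C.update b k (C.f i (b.1 k))) := by
      rw [ehat_update_self, C.eps_f]
      push_cast
      omega
    rw [Eop, if_pos hE, update_apply_self, C.e_f, update_update_apply_self]
  · have hpos : 0 < C.epss i (b.1 (k + 1)) := by omega
    have hE : ¬0 < C.ehat i k (C.update b (k + 1) (C.es i (b.1 (k + 1)))) := by
      rw [ehat_update_succ, C.epss_es i _ hpos]
      omega
    rw [Eop, if_neg hE, update_apply_self, C.fs_es i _ hpos, update_update_apply_self]

lemma Fop_leftInverse_Eop (i : I) (k : ℤ) : Function.LeftInverse (C.Fop i k) (C.Eop i k) := by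
  intro b
  unfold Eop
  split_ifs with h <;> unfold ehat at h
  · have hpos : 0 < C.eps i (b.1 k) := by omega
    have hF : 0 ≤ C.ehat i k (C.update b k (C.e i (b.1 k))) := by
      rw [ehat_update_self, C.eps_e i _ hpos]
      omega
    rw [Fop, if_pos hF, update_apply_self, C.f_e i _ hpos, update_update_apply_self]
  · have hF : ¬0 ≤ C.ehat i k (C.update b (k + 1) (C.fs i (b.1 (k + 1)))) := by
      rw [ehat_update_succ, C.epss_fs]
      push_cast
      omega
    rw [Fop, if_neg hF, update_apply_self, C.es_fs, update_update_apply_self]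

end InfCrystal

/-- The extended crystal operators are mutually inverse:
`E_{i,k} ∘ F_{i,k} = id` and `F_{i,k} ∘ E_{i,k} = id` on `B̂(∞)`. -/
theorem Eop_Fop_inverse {I : Type*} (C : InfCrystal I) (i : I) (k : ℤ) :
    C.Eop i k ∘ C.Fop i k = id ∧ C.Fop i k ∘ C.Eop i k = id :=
  ⟨(C.Eop_leftInverse_Fop i k).comp_eq_id, (C.Fop_leftInverse_Eop i k).comp_eq_id⟩
end

section
/- For each i ∈ I, R_i ∘ ζ = ζ ∘ R_{ζ(i)} and R_i* ∘ ζ = ζ ∘ R_{ζ(i)}* on B̂(∞), where ζ is the involution induced by the Dynkin diagram automorphism i ↦ i*. -/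
/-!
`Rᵢ` and `Rᵢ*` are assembled from `f̃ᵢ, ẽᵢ, f̃ᵢ*, ẽᵢ*` by iteration, with exponents read off
from `εᵢ, εᵢ*` and `⟨hᵢ, wt⟩`. A map `z` intertwining each of these data for colour `ζ i` with
those for colour `i` therefore intertwines every stage of the construction: `ẽᵢ^{max}`, the
Saito reflections, `T̃ᵢ, T̃ᵢ*`, and, componentwise, `Rᵢ` and `Rᵢ*`.
-/

namespace InfCrystal

open Function

variable {I : Type*} (C : InfCrystal I) {z : C.B → C.B} {i j : I}

lemma semiconj_emax (he : Semiconj z (C.e j) (C.e i)) (heps : ∀ b, C.eps i (z b) = C.eps j b) :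
    Semiconj z (C.emax j) (C.emax i) := fun b => by
  rw [emax, emax, heps]
  exact he.iterate_right _ b

lemma semiconj_esmax (hes : Semiconj z (C.es j) (C.es i))
    (hepss : ∀ b, C.epss i (z b) = C.epss j b) :
    Semiconj z (C.esmax j) (C.esmax i) := fun b => by
  rw [esmax, esmax, hepss]
  exact hes.iterate_right _ b

lemma semiconj_saitoT (hf : Semiconj z (C.f j) (C.f i)) (hes : Semiconj z (C.es j) (C.es i))
    (hepss : ∀ b, C.epss i (z b) = C.epss j b)
    (hwt : ∀ b, C.pair i (C.wt (z b)) = C.pair j (C.wt b)) :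
    Semiconj z (C.saitoT j) (C.saitoT i) := fun b => by
  rw [saitoT, saitoT, hepss, hwt, ← hes.iterate_right]
  exact hf.iterate_right _ _

lemma semiconj_saitoTs (he : Semiconj z (C.e j) (C.e i)) (hfs : Semiconj z (C.fs j) (C.fs i))
    (heps : ∀ b, C.eps i (z b) = C.eps j b)
    (hwt : ∀ b, C.pair i (C.wt (z b)) = C.pair j (C.wt b)) :
    Semiconj z (C.saitoTs j) (C.saitoTs i) := fun b => by
  rw [saitoTs, saitoTs, heps, hwt, ← he.iterate_right]
  exact hfs.iterate_right _ _

lemma semiconj_Rop (hz : z C.hv = C.hv) (hfs : Semiconj z (C.fs j) (C.fs i))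
    (heps : ∀ b, C.eps i (z b) = C.eps j b) (htT : Semiconj z (C.tT j) (C.tT i)) :
    Semiconj (C.mapHat z hz) (C.Rop j) (C.Rop i) := fun b => by
  refine Subtype.ext (funext fun k => ?_)
  change z ((C.fs j)^[_] _) = (C.fs i)^[C.eps i (z (b.1 (k - 1)))] (C.tT i (z (b.1 k)))
  rw [heps, ← htT, hfs.iterate_right]

lemma semiconj_Rops (hz : z C.hv = C.hv) (hf : Semiconj z (C.f j) (C.f i))
    (hepss : ∀ b, C.epss i (z b) = C.epss j b) (htTs : Semiconj z (C.tTs j) (C.tTs i)) :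
    Semiconj (C.mapHat z hz) (C.Rops j) (C.Rops i) := fun b => by
  refine Subtype.ext (funext fun k => ?_)
  change z ((C.f j)^[_] _) = (C.f i)^[C.epss i (z (b.1 (k + 1)))] (C.tTs i (z (b.1 k)))
  rw [hepss, ← htTs, hf.iterate_right]

end InfCrystal

/-- Compatibility of the braid operators with the involution `ζ` induced by the
diagram automorphism `i ↦ i*`: if `z : B(∞) → B(∞)` is a crystal bijection with
`f̃ᵢ(z b) = z(f̃_{ζ(i)} b)` and analogous identities for `ẽᵢ, f̃ᵢ*, ẽᵢ*, εᵢ, εᵢ*`,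
fixing the highest weight vector, then on `B̂(∞)` one has
`Rᵢ ∘ ζ = ζ ∘ R_{ζ(i)}` and `Rᵢ* ∘ ζ = ζ ∘ R*_{ζ(i)}` (with `ζ` acting componentwise). -/
theorem Rop_zeta_comm {I : Type*} (C : InfCrystal I)
    (ζ : I → I) (z : C.B → C.B) (hz : z C.hv = C.hv)
    (hf : ∀ i b, C.f i (z b) = z (C.f (ζ i) b))
    (he : ∀ i b, C.e i (z b) = z (C.e (ζ i) b))
    (hfs : ∀ i b, C.fs i (z b) = z (C.fs (ζ i) b))
    (hes : ∀ i b, C.es i (z b) = z (C.es (ζ i) b))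
    (heps : ∀ i b, C.eps i (z b) = C.eps (ζ i) b)
    (hepss : ∀ i b, C.epss i (z b) = C.epss (ζ i) b)
    (hwtz : ∀ i b, C.pair i (C.wt (z b)) = C.pair (ζ i) (C.wt b)) :
    ∀ i : I,
      C.Rop i ∘ C.mapHat z hz = C.mapHat z hz ∘ C.Rop (ζ i) ∧
      C.Rops i ∘ C.mapHat z hz = C.mapHat z hz ∘ C.Rops (ζ i) := by
  intro i
  have hf' : Function.Semiconj z (C.f (ζ i)) (C.f i) := fun b => (hf i b).symm
  have he' : Function.Semiconj z (C.e (ζ i)) (C.e i) := fun b => (he i b).symm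
  have hfs' : Function.Semiconj z (C.fs (ζ i)) (C.fs i) := fun b => (hfs i b).symm
  have hes' : Function.Semiconj z (C.es (ζ i)) (C.es i) := fun b => (hes i b).symm
  have htT : Function.Semiconj z (C.tT (ζ i)) (C.tT i) :=
    (C.semiconj_saitoT hf' hes' (hepss i) (hwtz i)).comp_right (C.semiconj_emax he' (heps i))
  have htTs : Function.Semiconj z (C.tTs (ζ i)) (C.tTs i) :=
    (C.semiconj_saitoTs he' hfs' (heps i) (hwtz i)).comp_right (C.semiconj_esmax hes' (hepss i))
  exact ⟨(C.semiconj_Rop hz hfs' (heps i) htT).comp_eq.symm,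
    (C.semiconj_Rops hz hf' (hepss i) htTs).comp_eq.symm⟩
end
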